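/- The weighting of a 2-coloured triangulation is invariant under 2-coloured flips: if two 2-coloured triangulations of a convex polygon are related by a 2-coloured flip, then for every vertex x of the polygon, the sums (mod 3) of the colours (±1) of the triangles incident with x agree. -/

import Mathlib

namespace PolyFlip


/-- Two vertices of the convex `N`-gon are consecutive along the boundary. -/
def BdryAdj (N : ℕ) (i j : Fin N) : Prop :=
  (i.val + 1) % N = j.val ∨ (j.val + 1) % N = i.val

/-- `d` is a diagonal of the convex `N`-gon: an unordered pair of distinct,
non-consecutive vertices. -/
def IsDiag (N : ℕ) (d : Finset (Fin N)) : Prop :=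
  ∃ i j : Fin N, i ≠ j ∧ ¬ BdryAdj N i j ∧ d = {i, j}

/-- The chord `d` crosses the chord `e` (in this orientation): the endpoints
interlace in the cyclic (here: linear) order of the polygon's vertices. -/
def Crosses {N : ℕ} (d e : Finset (Fin N)) : Prop :=
  ∃ a b c f : Fin N, d = {a, b} ∧ e = {c, f} ∧ a < c ∧ c < b ∧ b < f

/-- A triangulation of the convex `N`-gon: a maximal set of pairwise
non-crossing diagonals. -/
structure Triangulation (N : ℕ) where
  diags : Finset (Finset (Fin N))
  isDiag : ∀ d ∈ diags, IsDiag N d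
  noncross : ∀ d ∈ diags, ∀ e ∈ diags, ¬ Crosses d e
  maximal : ∀ d, IsDiag N d → (∀ e ∈ diags, ¬ Crosses d e ∧ ¬ Crosses e d) → d ∈ diags

/-- `a` and `b` are joined by an edge of the triangulated polygon:
either a boundary edge, or a diagonal of the triangulation. -/
def IsEdge {N : ℕ} (T : Triangulation N) (a b : Fin N) : Prop :=
  a ≠ b ∧ (BdryAdj N a b ∨ ({a, b} : Finset (Fin N)) ∈ T.diags)

/-- `t` is a triangle (face) of the triangulation `T`. -/
def IsTriangle {N : ℕ} (T : Triangulation N) (t : Finset (Fin N)) : Prop :=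
  ∃ a b c : Fin N, a ≠ b ∧ a ≠ c ∧ b ≠ c ∧ t = {a, b, c} ∧
    IsEdge T a b ∧ IsEdge T a c ∧ IsEdge T b c

/-- A coloured triangulation: a triangulation together with a colour in
`Fin m` for each of its triangles. -/
structure ColouredTri (N m : ℕ) where
  T : Triangulation N
  col : {t : Finset (Fin N) // IsTriangle T t} → Fin m

/-- The degree of a vertex `x` in the triangulated polygon. -/
noncomputable def degree {N : ℕ} (T : Triangulation N) (x : Fin N) : ℕ :=
  Nat.card {y : Fin N // IsEdge T x y}

/-- The `σ`-flip at the diagonal `d`: `d = {a,b}` is a diagonal of `C` whose two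
incident triangles `{a,b,x}` and `{a,b,y}` have the same colour `i`; it is replaced by
the other diagonal `{x,y}` of the quadrilateral, the two new triangles `{a,x,y}` and
`{b,x,y}` get colour `σ i`, and all other triangles keep their colours. -/
def SFlipAt {N m : ℕ} (σ : Equiv.Perm (Fin m)) (d : Finset (Fin N))
    (C C' : ColouredTri N m) : Prop :=
  ∃ (a b x y : Fin N) (h₁ : IsTriangle C.T {a, b, x}) (h₂ : IsTriangle C.T {a, b, y})
    (h₁' : IsTriangle C'.T {a, x, y}) (h₂' : IsTriangle C'.T {b, x, y}),
    d = {a, b} ∧ d ∈ C.T.diags ∧ x ≠ y ∧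
    C.col ⟨{a, b, x}, h₁⟩ = C.col ⟨{a, b, y}, h₂⟩ ∧
    C'.T.diags = insert {x, y} (C.T.diags.erase d) ∧
    C'.col ⟨{a, x, y}, h₁'⟩ = σ (C.col ⟨{a, b, x}, h₁⟩) ∧
    C'.col ⟨{b, x, y}, h₂'⟩ = σ (C.col ⟨{a, b, x}, h₁⟩) ∧
    ∀ (t : Finset (Fin N)) (ht : IsTriangle C.T t) (ht' : IsTriangle C'.T t),
      t ≠ {a, b, x} → t ≠ {a, b, y} → C'.col ⟨t, ht'⟩ = C.col ⟨t, ht⟩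

/-- The `σ`-flip relation. -/
def SFlip {N m : ℕ} (σ : Equiv.Perm (Fin m)) (C C' : ColouredTri N m) : Prop :=
  ∃ d, SFlipAt σ d C C'

/-- The 2-coloured flip at a diagonal (the colour permutation swaps the two colours). -/
abbrev Flip2At {N : ℕ} (d : Finset (Fin N)) (C C' : ColouredTri N 2) : Prop :=
  SFlipAt (finRotate 2) d C C'

/-- The 2-coloured flip relation. -/
abbrev Flip2 {N : ℕ} (C C' : ColouredTri N 2) : Prop :=
  SFlip (finRotate 2) C C'

/-- The 2-coloured flip graph of the convex `N`-gon: vertices are the 2-coloured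
triangulations, edges are single 2-coloured flips. -/
def flipGraph (N : ℕ) : SimpleGraph (ColouredTri N 2) where
  Adj C C' := C ≠ C' ∧ (Flip2 C C' ∨ Flip2 C' C)
  symm := ⟨fun C C' h => ⟨h.1.symm, h.2.symm⟩⟩
  loopless := ⟨fun C h => h.1 rfl⟩

/-- The sign (`+1` for colour `0`, `-1` for colour `1`) of a colour, in `ZMod 3`. -/
def signVal (c : Fin 2) : ZMod 3 := if c = 0 then 1 else -1

/-- The weight of a vertex `x`: the sum, modulo 3, of the signs of all triangles
incident with `x`. -/
noncomputable def weight {N : ℕ} (C : ColouredTri N 2) (x : Fin N) : ZMod 3 :=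
  ∑ᶠ t : {t : Finset (Fin N) // IsTriangle C.T t},
    if x ∈ t.val then signVal (C.col t) else 0

/-- The number of triangles coloured `+1` (colour `0`). -/
noncomputable def plusCount {N : ℕ} (C : ColouredTri N 2) : ℕ :=
  Nat.card {t : {t : Finset (Fin N) // IsTriangle C.T t} // C.col t = 0}

/-- Adjacency in the `k`-dimensional hypercube: the two vertices differ in
exactly one coordinate. -/
def cubeAdj (k : ℕ) (u v : Fin k → Bool) : Prop := ∃! i, u i ≠ v i

/-- The `k`-dimensional hypercube graph on `{0,1}^k`. -/
def cubeGraph (k : ℕ) : SimpleGraph (Fin k → Bool) where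
  Adj := cubeAdj k
  symm := by
    constructor
    rintro u v ⟨i, hi, hu⟩
    exact ⟨i, hi.symm, fun j hj => hu j hj.symm⟩
  loopless := by
    constructor
    rintro u ⟨i, hi, -⟩
    exact hi rfl

/-- `f` exhibits a `k`-dimensional hypercube inside the connected component of `C`
in the 2-coloured flip graph. -/
def CubeEmb {N : ℕ} (C : ColouredTri N 2) (k : ℕ)
    (f : (Fin k → Bool) → ColouredTri N 2) : Prop :=
  Function.Injective f ∧
  (∀ u v, cubeAdj k u v → (flipGraph N).Adj (f u) (f v)) ∧
  ∀ u, (flipGraph N).Reachable C (f u)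

/-- `G` contains a subdivision (topological copy) of `H`: there are branch vertices
`f w` for the vertices `w` of `H` and internally disjoint paths in `G` between them
realising the edges of `H`. -/
def ContainsSubdivision {V W : Type*} (G : SimpleGraph V) (H : SimpleGraph W) : Prop :=
  ∃ f : W → V, Function.Injective f ∧
    ∃ P : ∀ u v : W, H.Adj u v → G.Walk (f u) (f v),
      (∀ u v (h : H.Adj u v), (P u v h).IsPath) ∧
      (∀ u v (h : H.Adj u v) (w : W), f w ∈ (P u v h).support → w = u ∨ w = v) ∧
      (∀ u₁ v₁ (h₁ : H.Adj u₁ v₁) u₂ v₂ (h₂ : H.Adj u₂ v₂),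
        (s(u₁, v₁) : Sym2 W) ≠ s(u₂, v₂) →
        ∀ x, x ∈ (P u₁ v₁ h₁).support → x ∈ (P u₂ v₂ h₂).support →
          (x = f u₁ ∨ x = f v₁) ∧ (x = f u₂ ∨ x = f v₂))

/-- Planarity, via Kuratowski's characterisation: a graph is planar iff it contains
no subdivision of `K₅` and no subdivision of `K₃,₃`. -/
def IsPlanar {V : Type*} (G : SimpleGraph V) : Prop :=
  ¬ ContainsSubdivision G (SimpleGraph.completeGraph (Fin 5)) ∧
  ¬ ContainsSubdivision G (completeBipartiteGraph (Fin 3) (Fin 3))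

/-!
A flip at the diagonal `ab` replaces the two triangles `abp`, `abq` of colour `i` by the two
triangles `apq`, `bpq` of colour `-i` and changes nothing else: since `ab` and `pq` cross, no
other triangle of either triangulation has `ab` or `pq` as a side. So, with `s = ±1` the sign
of `i`, the weight of `x` drops by `s` times the number of these four triangles that contain
`x`. Each of `a`, `b`, `p`, `q` lies in exactly three of them and every other vertex in none,
so the weight does not change modulo 3.
-/

section

variable {N : ℕ}

lemma BdryAdj.val_cases {i j : Fin N} (h : BdryAdj N i j) :
    j.val = i.val + 1 ∨ i.val = j.val + 1 ∨
      (i.val = 0 ∧ j.val + 1 = N) ∨ (j.val = 0 ∧ i.val + 1 = N) := by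
  have mod_succ : ∀ k < N, (k + 1) % N = k + 1 ∨ (k + 1 = N ∧ (k + 1) % N = 0) := fun k hk =>
    (Nat.succ_le_of_lt hk).lt_or_eq.imp Nat.mod_eq_of_lt fun he => ⟨he, he ▸ Nat.mod_self N⟩
  have := mod_succ _ i.isLt
  have := mod_succ _ j.isLt
  unfold BdryAdj at h
  omega

lemma BdryAdj.not_crosses {i j : Fin N} (h : BdryAdj N i j) (e : Finset (Fin N)) :
    ¬ Crosses {i, j} e ∧ ¬ Crosses e {i, j} := by
  have hv := h.val_cases
  constructor <;> rintro ⟨a, b, c, f, hd, he, hac, hcb, hbf⟩ <;>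
    simp only [Fin.lt_def] at hac hcb hbf
  · have ha : a ∈ ({i, j} : Finset (Fin N)) := hd ▸ by simp
    have hb : b ∈ ({i, j} : Finset (Fin N)) := hd ▸ by simp
    simp only [Finset.mem_insert, Finset.mem_singleton] at ha hb
    have := f.isLt
    rcases ha with rfl | rfl <;> rcases hb with rfl | rfl <;> omega
  · have hc : c ∈ ({i, j} : Finset (Fin N)) := he ▸ by simp
    have hf : f ∈ ({i, j} : Finset (Fin N)) := he ▸ by simp
    simp only [Finset.mem_insert, Finset.mem_singleton] at hc hf
    rcases hc with rfl | rfl <;> rcases hf with rfl | rfl <;> omega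

namespace IsEdge

variable {T : Triangulation N} {u v : Fin N}

lemma symm (h : IsEdge T u v) : IsEdge T v u :=
  ⟨h.1.symm, h.2.imp Or.symm fun hd => Finset.pair_comm u v ▸ hd⟩

lemma not_interlace {w z : Fin N} (h : IsEdge T u v) (h' : IsEdge T w z)
    (h₁ : u < w) (h₂ : w < v) (h₃ : v < z) : False := by
  have hcross : Crosses {u, v} {w, z} := ⟨u, v, w, z, rfl, rfl, h₁, h₂, h₃⟩
  rcases h.2 with hb | hd
  · exact (hb.not_crosses _).1 hcross
  rcases h'.2 with hb' | hd'
  · exact (hb'.not_crosses _).2 hcross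
  exact T.noncross _ hd _ hd' hcross

end IsEdge

namespace IsTriangle

variable {T : Triangulation N} {t : Finset (Fin N)} {u v : Fin N}

lemma ne {a b c : Fin N} (h : IsTriangle T {a, b, c}) : a ≠ b ∧ a ≠ c ∧ b ≠ c := by
  obtain ⟨a', b', c', hab, hac, hbc, he, -⟩ := h
  have hcard : ({a, b, c} : Finset (Fin N)).card = 3 := by
    rw [he, Finset.card_eq_three]
    exact ⟨a', b', c', hab, hac, hbc, rfl⟩
  refine ⟨?_, ?_, ?_⟩ <;> rintro rfl <;>
    simp only [Finset.mem_insert, Finset.mem_singleton, true_or, or_true,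
      Finset.insert_eq_of_mem] at hcard <;>
    exact absurd hcard (Finset.card_le_two.trans_lt (by norm_num)).ne

lemma isEdge (h : IsTriangle T t) (hu : u ∈ t) (hv : v ∈ t) (huv : u ≠ v) : IsEdge T u v := by
  obtain ⟨a, b, c, -, -, -, rfl, hab, hac, hbc⟩ := h
  simp only [Finset.mem_insert, Finset.mem_singleton] at hu hv
  rcases hu with rfl | rfl | rfl <;> rcases hv with rfl | rfl | rfl <;>
    first
    | exact absurd rfl huv
    | assumption
    | exact IsEdge.symm ‹_›

lemma exists_eq_insert (h : IsTriangle T t) (hu : u ∈ t) (hv : v ∈ t) (huv : u ≠ v) :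
    ∃ z, t = {u, v, z} := by
  obtain ⟨a, b, c, -, -, -, rfl, -⟩ := h
  simp only [Finset.mem_insert, Finset.mem_singleton] at hu hv
  rcases hu with rfl | rfl | rfl <;> rcases hv with rfl | rfl | rfl <;>
    first
    | exact absurd rfl huv
    | exact ⟨c, rfl⟩
    | exact ⟨c, Finset.insert_comm _ _ _⟩
    | exact ⟨a, by ext; simp only [Finset.mem_insert, Finset.mem_singleton]; tauto⟩
    | exact ⟨b, by ext; simp only [Finset.mem_insert, Finset.mem_singleton]; tauto⟩

lemma mono {T' : Triangulation N} (h : IsTriangle T t)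
    (hT : ∀ x ∈ t, ∀ y ∈ t, IsEdge T x y → IsEdge T' x y) : IsTriangle T' t := by
  obtain ⟨a, b, c, hab, hac, hbc, rfl, e₁, e₂, e₃⟩ := h
  exact ⟨a, b, c, hab, hac, hbc, rfl, hT _ (by simp) _ (by simp) e₁,
    hT _ (by simp) _ (by simp) e₂, hT _ (by simp) _ (by simp) e₃⟩

end IsTriangle

namespace Triangulation

variable {T T' : Triangulation N} {t : Finset (Fin N)} {u v z w a b p q r : Fin N}

lemma common_neighbours_opposite_sides (huv : u < v) (hzw : z ≠ w)
    (huz : IsEdge T u z) (hvz : IsEdge T v z) (huw : IsEdge T u w) (hvw : IsEdge T v w) :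
    ¬ (z ∈ Set.Ioo u v ↔ w ∈ Set.Ioo u v) := by
  wlog hlt : z < w generalizing z w
  · exact fun h => this hzw.symm huw hvw huz hvz ((lt_or_gt_of_ne hzw).resolve_left hlt) h.symm
  have := huz.1
  have := hvz.1
  have := huw.1
  have := hvw.1
  simp only [Set.mem_Ioo]
  intro hside
  by_cases hz : u < z ∧ z < v
  · exact huw.not_interlace hvz.symm hz.1 hlt (hside.1 hz).2
  have hw : ¬ (u < w ∧ w < v) := fun hw => hz (hside.2 hw)
  by_cases hzu' : z < u
  · by_cases hwu' : w < u
    · exact huz.symm.not_interlace hvw.symm hlt hwu' huv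
    · exact hvz.symm.not_interlace huw hzu' huv (by omega)
  · exact huz.not_interlace hvw huv (by omega) hlt

lemma eq_or_eq_of_isTriangle (h₁ : IsTriangle T {u, v, p}) (h₂ : IsTriangle T {u, v, q})
    (h₃ : IsTriangle T {u, v, r}) (hpq : p ≠ q) : r = p ∨ r = q := by
  wlog huv : u < v generalizing u v
  · rw [Finset.insert_comm] at h₁ h₂ h₃
    exact this h₁ h₂ h₃ (lt_of_le_of_ne (not_lt.1 huv) h₁.ne.1)
  by_contra! hr
  have e {x} (hx : IsTriangle T {u, v, x}) : IsEdge T u x ∧ IsEdge T v x :=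
    ⟨hx.isEdge (by simp) (by simp) hx.ne.2.1, hx.isEdge (by simp) (by simp) hx.ne.2.2⟩
  have h₁₂ := common_neighbours_opposite_sides huv hpq (e h₁).1 (e h₁).2 (e h₂).1 (e h₂).2
  have h₁₃ := common_neighbours_opposite_sides huv (Ne.symm hr.1)
    (e h₁).1 (e h₁).2 (e h₃).1 (e h₃).2
  have h₂₃ := common_neighbours_opposite_sides huv (Ne.symm hr.2)
    (e h₂).1 (e h₂).2 (e h₃).1 (e h₃).2
  -- two of the three apexes lie on the same side of `uv`
  tauto

lemma not_isEdge_of_isTriangle (h₁ : IsTriangle T {u, v, p}) (h₂ : IsTriangle T {u, v, q})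
    (hpq : p ≠ q) : ¬ IsEdge T p q := by
  wlog huv : u < v generalizing u v
  · rw [Finset.insert_comm] at h₁ h₂
    exact this h₁ h₂ (lt_of_le_of_ne (not_lt.1 huv) h₁.ne.1)
  intro epq
  have euv : IsEdge T u v := h₁.isEdge (by simp) (by simp) h₁.ne.1
  obtain ⟨-, hup, hvp⟩ := h₁.ne
  obtain ⟨-, huq, hvq⟩ := h₂.ne
  have hside := common_neighbours_opposite_sides huv hpq
    (h₁.isEdge (by simp) (by simp) hup) (h₁.isEdge (by simp) (by simp) hvp)
    (h₂.isEdge (by simp) (by simp) huq) (h₂.isEdge (by simp) (by simp) hvq)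
  simp only [Set.mem_Ioo] at hside
  by_cases hp : u < p ∧ p < v <;> by_cases hq : u < q ∧ q < v
  · exact hside (iff_of_true hp hq)
  · rcases lt_or_gt_of_ne huq.symm with hqu | hvq
    · exact epq.symm.not_interlace euv hqu hp.1 hp.2
    · exact euv.not_interlace epq hp.1 hp.2 (by omega)
  · rcases lt_or_gt_of_ne hup.symm with hpu | hvp
    · exact epq.not_interlace euv hpu hq.1 hq.2
    · exact euv.not_interlace epq.symm hq.1 hq.2 (by omega)
  · exact hside (iff_of_false hp hq)

lemma isTriangle_of_diags_erase (hT : ∀ d ∈ T.diags, d ≠ {u, v} → d ∈ T'.diags)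
    (h₁ : IsTriangle T {u, v, p}) (h₂ : IsTriangle T {u, v, q}) (hpq : p ≠ q)
    (ht : IsTriangle T t) (ht₁ : t ≠ {u, v, p}) (ht₂ : t ≠ {u, v, q}) : IsTriangle T' t := by
  by_cases huv : u ∈ t ∧ v ∈ t
  · obtain ⟨z, rfl⟩ := ht.exists_eq_insert huv.1 huv.2 h₁.ne.1
    rcases eq_or_eq_of_isTriangle h₁ h₂ ht hpq with rfl | rfl
    exacts [absurd rfl ht₁, absurd rfl ht₂]
  refine ht.mono fun x hx y hy hxy => ⟨hxy.1, hxy.2.imp id fun hd => hT _ hd fun hxyuv => ?_⟩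
  have hsub : ({x, y} : Finset (Fin N)) ⊆ t := Finset.insert_subset hx (by simpa using hy)
  rw [hxyuv] at hsub
  exact huv ⟨hsub (by simp), hsub (by simp)⟩

def quadTriangles (a b p q : Fin N) : Finset (Finset (Fin N)) :=
  {{a, b, p}, {a, b, q}, {a, p, q}, {b, p, q}}

lemma isTriangle_iff_of_flip (hT' : T'.diags = insert {p, q} (T.diags.erase {a, b}))
    (h₁ : IsTriangle T {a, b, p}) (h₂ : IsTriangle T {a, b, q})
    (h₁' : IsTriangle T' {a, p, q}) (h₂' : IsTriangle T' {b, p, q})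
    (ht : t ∉ quadTriangles a b p q) : IsTriangle T t ↔ IsTriangle T' t := by
  simp only [quadTriangles, Finset.mem_insert, Finset.mem_singleton, not_or] at ht
  obtain ⟨ht₁, ht₂, ht₃, ht₄⟩ := ht
  rw [Finset.insert_comm, Finset.pair_comm] at h₁' h₂' ht₃ ht₄
  refine ⟨fun h => isTriangle_of_diags_erase ?_ h₁ h₂ h₁'.ne.1 h ht₁ ht₂,
    fun h => isTriangle_of_diags_erase ?_ h₁' h₂' h₁.ne.1 h ht₃ ht₄⟩
  · exact fun d hd hne => hT' ▸ Finset.mem_insert_of_mem (Finset.mem_erase.2 ⟨hne, hd⟩)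
  · intro d hd hne
    rw [hT', Finset.mem_insert] at hd
    exact Finset.mem_of_mem_erase (hd.resolve_left hne)

lemma sum_quadTriangles_eq_zero (hab : a ≠ b) (hap : a ≠ p) (haq : a ≠ q) (hbp : b ≠ p)
    (hbq : b ≠ q) (hpq : p ≠ q) (s : ZMod 3) (x : Fin N) :
    ∑ t ∈ quadTriangles a b p q, (if x ∈ t then s else 0) = 0 := by
  have h3 : s + (s + s) = 0 := by revert s; decide
  rw [quadTriangles, Finset.sum_insert, Finset.sum_insert, Finset.sum_pair]
  · by_cases hxa : x = a
    · subst hxa; simpa [hab, hap, haq] using h3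
    by_cases hxb : x = b
    · subst hxb; simpa [hab.symm, hbp, hbq] using h3
    by_cases hxp : x = p
    · subst hxp; simpa [hap.symm, hbp.symm, hpq] using h3
    by_cases hxq : x = q
    · subst hxq; simpa [haq.symm, hbq.symm, hpq.symm] using h3
    simp [hxa, hxb, hxp, hxq]
  · exact ne_of_mem_of_not_mem' (a := a) (by simp) (by simp [hab, hap, haq])
  · simp only [Finset.mem_insert, Finset.mem_singleton, not_or]
    exact ⟨ne_of_mem_of_not_mem' (a := b) (by simp) (by simp [hab.symm, hbp, hbq]),
      ne_of_mem_of_not_mem' (a := a) (by simp) (by simp [hab, hap, haq])⟩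
  · simp only [Finset.mem_insert, Finset.mem_singleton, not_or]
    exact ⟨ne_of_mem_of_not_mem' (a := p) (by simp) (by simp [hap.symm, hbp.symm, hpq]),
      ne_of_mem_of_not_mem' (a := b) (by simp) (by simp [hab.symm, hbp, hbq]),
      ne_of_mem_of_not_mem' (a := a) (by simp) (by simp [hab, hap, haq])⟩

end Triangulation

lemma signVal_finRotate : ∀ c : Fin 2, signVal (finRotate 2 c) = -signVal c := by
  decide

namespace ColouredTri

open Triangulation

variable {C C' : ColouredTri N 2} {t : Finset (Fin N)} {a b p q : Fin N}

open Classical in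
noncomputable def triSign (C : ColouredTri N 2) (t : Finset (Fin N)) : ZMod 3 :=
  if h : IsTriangle C.T t then signVal (C.col ⟨t, h⟩) else 0

lemma triSign_of_isTriangle (h : IsTriangle C.T t) : C.triSign t = signVal (C.col ⟨t, h⟩) :=
  dif_pos h

lemma triSign_of_not_isTriangle (h : ¬ IsTriangle C.T t) : C.triSign t = 0 :=
  dif_neg h

lemma weight_eq_sum_triSign (C : ColouredTri N 2) (x : Fin N) :
    weight C x = ∑ t, if x ∈ t then C.triSign t else 0 := by
  classical
  have hoff : ∑ t : {t // ¬ IsTriangle C.T t}, (if x ∈ t.1 then C.triSign t else 0) = 0 :=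
    Finset.sum_eq_zero fun t _ => by rw [triSign_of_not_isTriangle t.2, ite_self]
  rw [weight, finsum_eq_sum_of_fintype, ← Fintype.sum_subtype_add_sum_subtype (IsTriangle C.T),
    hoff, add_zero]
  exact Finset.sum_congr rfl fun t _ => by rw [triSign_of_isTriangle t.2]

lemma weight_sub_weight_eq_sum {Q : Finset (Finset (Fin N))} {s : ZMod 3}
    (h : ∀ t, C.triSign t - C'.triSign t = if t ∈ Q then s else 0) (x : Fin N) :
    weight C x - weight C' x = ∑ t ∈ Q, if x ∈ t then s else 0 := by
  classical
  rw [weight_eq_sum_triSign, weight_eq_sum_triSign, ← Finset.sum_sub_distrib,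
    ← Finset.univ_inter Q, ← Finset.sum_ite_mem]
  refine Finset.sum_congr rfl fun t _ => ?_
  by_cases hx : x ∈ t <;> simp [hx, h t]

lemma triSign_sub_triSign_of_flip
    (h₁ : IsTriangle C.T {a, b, p}) (h₂ : IsTriangle C.T {a, b, q})
    (h₁' : IsTriangle C'.T {a, p, q}) (h₂' : IsTriangle C'.T {b, p, q})
    (hdiags : C'.T.diags = insert {p, q} (C.T.diags.erase {a, b}))
    (hcol : C.col ⟨_, h₁⟩ = C.col ⟨_, h₂⟩)
    (hcol₁ : C'.col ⟨_, h₁'⟩ = finRotate 2 (C.col ⟨_, h₁⟩))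
    (hcol₂ : C'.col ⟨_, h₂'⟩ = finRotate 2 (C.col ⟨_, h₁⟩))
    (hcol_eq : ∀ t (ht : IsTriangle C.T t) (ht' : IsTriangle C'.T t),
      t ≠ {a, b, p} → t ≠ {a, b, q} → C'.col ⟨t, ht'⟩ = C.col ⟨t, ht⟩)
    (t : Finset (Fin N)) :
    C.triSign t - C'.triSign t =
      if t ∈ quadTriangles a b p q then signVal (C.col ⟨_, h₁⟩) else 0 := by
  by_cases ht : t ∈ quadTriangles a b p q
  · have hab' : ¬ IsEdge C'.T a b := not_isEdge_of_isTriangle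
      (by rwa [Finset.insert_comm, Finset.pair_comm] at h₁')
      (by rwa [Finset.insert_comm, Finset.pair_comm] at h₂') h₁.ne.1
    have hpq' : ¬ IsEdge C.T p q := not_isEdge_of_isTriangle h₁ h₂ h₁'.ne.2.2
    rw [if_pos ht]
    simp only [quadTriangles, Finset.mem_insert, Finset.mem_singleton] at ht
    rcases ht with rfl | rfl | rfl | rfl
    · rw [triSign_of_isTriangle h₁, triSign_of_not_isTriangle
        fun h => hab' (h.isEdge (by simp) (by simp) h₁.ne.1), sub_zero]
    · rw [triSign_of_isTriangle h₂, triSign_of_not_isTriangle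
        fun h => hab' (h.isEdge (by simp) (by simp) h₁.ne.1), sub_zero, hcol]
    · rw [triSign_of_isTriangle h₁', triSign_of_not_isTriangle
        fun h => hpq' (h.isEdge (by simp) (by simp) h₁'.ne.2.2), hcol₁, signVal_finRotate,
        zero_sub, neg_neg]
    · rw [triSign_of_isTriangle h₂', triSign_of_not_isTriangle
        fun h => hpq' (h.isEdge (by simp) (by simp) h₁'.ne.2.2), hcol₂, signVal_finRotate,
        zero_sub, neg_neg]
  · have hiff := isTriangle_iff_of_flip hdiags h₁ h₂ h₁' h₂' ht
    rw [if_neg ht, sub_eq_zero]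
    by_cases hC : IsTriangle C.T t
    · simp only [quadTriangles, Finset.mem_insert, Finset.mem_singleton, not_or] at ht
      rw [triSign_of_isTriangle hC, triSign_of_isTriangle (hiff.1 hC), hcol_eq t hC _ ht.1 ht.2.1]
    · rw [triSign_of_not_isTriangle hC, triSign_of_not_isTriangle (hiff.not.1 hC)]

end ColouredTri

end

/-- The weighting of a 2-coloured triangulation is invariant under 2-coloured
flips. -/
theorem weight_invariant_under_flip {N : ℕ} (C C' : ColouredTri N 2)
    (h : Flip2 C C') (x : Fin N) : weight C x = weight C' x := by
  obtain ⟨_, a, b, p, q, h₁, h₂, h₁', h₂', rfl, -, hpq, hcol, hdiags, hcol₁, hcol₂, hcol_eq⟩ := h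
  obtain ⟨hab, hap, hbp⟩ := h₁.ne
  obtain ⟨-, haq, hbq⟩ := h₂.ne
  rw [← sub_eq_zero, ColouredTri.weight_sub_weight_eq_sum
    (ColouredTri.triSign_sub_triSign_of_flip h₁ h₂ h₁' h₂' hdiags hcol hcol₁ hcol₂ hcol_eq)]
  exact Triangulation.sum_quadTriangles_eq_zero hab hap haq hbp hbq hpq _ x

end PolyFlip
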